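/- arXiv:0804.1015 — 2 statements merged into one kernel-verified Lean document; each statement's English description precedes it below -/
import Mathlib

section
/- Let A be a Grothendieck category and B ⊆ A a localizing Serre subcategory closed under essential monomorphisms, with torsion functor τ : A → B right adjoint to the inclusion. Then for every injective object I of A, the subobject τ(I) is an injective object of A (hence a direct summand of I). -/
/-!
The counit `ε : τ I ⟶ I` is a monomorphism: its kernel lies in `B`, and a morphism from an object
of `B` into `τ I` is determined by its composite with `ε`. By Zorn's lemma there is a subobject
`M ⊆ I` maximal with `M ∩ τ I = 0`, encoded as "`τ I ⟶ I ⟶ I / M` is a monomorphism"; chains are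
handled by AB5, since a filtered colimit of monomorphisms is a monomorphism. Maximality makes
`τ I ⟶ I / M` an essential monomorphism, so `I / M ∈ B`. Extending `ε` along `τ I ⟶ I / M` by
injectivity of `I` gives a map `I / M ⟶ I` that factors through `τ I`, and `I ⟶ I / M ⟶ τ I` is
then a retraction of `ε`.
-/

open CategoryTheory CategoryTheory.Limits

universe w v u

noncomputable section

namespace CategoryTheory

variable {C : Type u} [Category.{v} C]

namespace ObjectProperty

variable {P : ObjectProperty C} {τ : C ⥤ P.FullSubcategory} (adj : P.ι ⊣ τ)

lemma mono_counit_app_of_isClosedUnderSubobjects [Abelian C] [P.IsClosedUnderSubobjects]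
    (X : C) : Mono (adj.counit.app X) := by
  let K : P.FullSubcategory :=
    ⟨kernel (adj.counit.app X), P.prop_of_mono (kernel.ι _) (τ.obj X).property⟩
  let k : K ⟶ τ.obj X := ObjectProperty.homMk (kernel.ι (adj.counit.app X))
  have hk : k = 0 := (adj.homEquiv K X).symm.injective <| by
    rw [Adjunction.homEquiv_counit, Adjunction.homEquiv_counit]
    simp [k]
  exact Abelian.mono_of_kernel_ι_eq_zero _ (by simpa [k] using congrArg P.ι.map hk)

lemma isSplitMono_counit_app_of_mono_comp {I : C} [Injective I] {Z : C} (hZ : P Z)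
    (q : I ⟶ Z) (hq : Mono (adj.counit.app I ≫ q)) : IsSplitMono (adj.counit.app I) := by
  have : Mono (adj.counit.app I) := mono_of_mono _ q
  let g : Z ⟶ I := Injective.factorThru (adj.counit.app I) (adj.counit.app I ≫ q)
  let g' : (⟨Z, hZ⟩ : P.FullSubcategory) ⟶ τ.obj I := adj.homEquiv _ _ g
  have hg' : P.ι.map g' ≫ adj.counit.app I = g := by
    simpa [g'] using (adj.homEquiv_counit (g := g')).symm
  refine IsSplitMono.mk' ⟨q ≫ P.ι.map g', ?_⟩
  rw [← cancel_mono (adj.counit.app I), Category.assoc, Category.assoc, hg', ← Category.assoc,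
    Injective.comp_factorThru, Category.id_comp]

end ObjectProperty

section Abelian

variable [Abelian C]

lemma Abelian.mono_of_kernel_ι_comp_eq_zero {X Y Z : C} (q : X ⟶ Y) [Epi q] (g : Y ⟶ Z)
    (h : kernel.ι (q ≫ g) ≫ q = 0) : Mono g := by
  open Abelian.Pseudoelement in
  refine mono_of_zero_of_map_zero g fun y hy => ?_
  obtain ⟨x, rfl⟩ := pseudo_surjective_of_epi q y
  obtain ⟨k, rfl⟩ := pseudo_exact_of_exact (S := .mk _ _ (kernel.condition (q ≫ g)))
    (ShortComplex.kernelSequence_exact _) x (by rwa [Pseudoelement.comp_apply])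
  rw [← Pseudoelement.comp_apply, h, Pseudoelement.zero_apply]

lemma mono_comp_cokernel_π_of_arrow_comp_eq_zero {T I W : C} (c : T ⟶ I) {N : Subobject I}
    (h : I ⟶ W) (hN : N.arrow ≫ h = 0) [Mono (c ≫ h)] : Mono (c ≫ cokernel.π N.arrow) := by
  have : Mono ((c ≫ cokernel.π N.arrow) ≫ cokernel.desc _ h hN) := by simpa
  exact mono_of_mono _ (cokernel.desc _ h hN)

def Subobject.cokernelFunctor (I : C) : Subobject I ⥤ C where
  obj N := cokernel N.arrow
  map {N N'} u := cokernel.desc N.arrow (cokernel.π N'.arrow)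
    (by rw [← Subobject.ofLE_arrow u.le, Category.assoc, cokernel.condition, comp_zero])

lemma exists_forall_le_and_mono_comp_cokernel_π [HasFilteredColimitsOfSize.{w, w} C]
    [AB5OfSize.{w, w} C] {ι : Type w} [Preorder ι] [IsDirected ι (· ≤ ·)] [Nonempty ι]
    {T I : C} (c : T ⟶ I) {M : ι → Subobject I} (hM : Monotone M)
    (h : ∀ i, Mono (c ≫ cokernel.π (M i).arrow)) :
    ∃ N : Subobject I, (∀ i, M i ≤ N) ∧ Mono (c ≫ cokernel.π N.arrow) := by
  have : IsFiltered ι := isFiltered_of_directed_le_nonempty ι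
  have : IsConnected ι := IsFiltered.isConnected ι
  let X := hM.functor ⋙ Subobject.cokernelFunctor I
  let p : (Functor.const ι).obj I ⟶ X :=
    { app i := cokernel.π (M i).arrow
      naturality i j u := (Category.id_comp _).trans (cokernel.π_desc _ _ _).symm }
  let f := (Functor.const ι).map c ≫ p
  have : ∀ i, Mono (f.app i) := h
  have : Mono f := NatTrans.mono_of_mono_app f
  have hq (i j : ι) : p.app i ≫ colimit.ι X i = p.app j ≫ colimit.ι X j :=
    constant_of_preserves_morphisms (fun i => p.app i ≫ colimit.ι X i)
      (fun i j u => by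
        rw [← colimit.w X u, ← p.naturality_assoc, Functor.const_obj_map]
        exact Category.id_comp _) i j
  obtain ⟨i₀⟩ := ‹Nonempty ι›
  -- The upper bound is the kernel of `q : I ⟶ colim I / Mᵢ`; AB5 makes `c ≫ q` a monomorphism.
  let q : I ⟶ colimit X := p.app i₀ ≫ colimit.ι X i₀
  have : Mono (c ≫ q) :=
    colim.map_mono' f (isColimitConstCocone ι T) (colimit.isColimit X) _
      (fun i => by
        simp only [f, q, hq i₀ i, NatTrans.comp_app, Functor.const_map_app, Category.assoc]
        exact Category.id_comp _)
  refine ⟨kernelSubobject q, fun i => le_kernelSubobject _ _ ?_,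
    mono_comp_cokernel_π_of_arrow_comp_eq_zero c q (kernelSubobject_arrow_comp q)⟩
  rw [show q = _ from hq i₀ i, ← Category.assoc,
    show (M i).arrow ≫ p.app i = 0 from cokernel.condition _, zero_comp]

lemma exists_maximal_mono_comp_cokernel_π [HasFilteredColimits C] [AB5 C] [WellPowered.{v} C]
    {T I : C} (c : T ⟶ I) [Mono c] :
    ∃ M : Subobject I, Maximal (fun N => Mono (c ≫ cokernel.π N.arrow)) M := by
  refine zorn_le₀ _ fun s hs hchain => ?_
  rcases s.eq_empty_or_nonempty with rfl | ⟨N₀, hN₀⟩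
  · refine ⟨⊥, ?_, by simp⟩
    change Mono (c ≫ cokernel.π (⊥ : Subobject I).arrow)
    rw [Subobject.bot_arrow]
    infer_instance
  · have : Small.{v} s := small_of_injective (f := Subtype.val) Subtype.val_injective
    let ι := Shrink.{v} s
    let M : ι → Subobject I := fun i => (equivShrink s).symm i
    let _ : Preorder ι := Preorder.lift M
    have : Nonempty ι := ⟨equivShrink s ⟨N₀, hN₀⟩⟩
    have : IsDirected ι (· ≤ ·) :=
      ⟨fun i j => by
        obtain ⟨N, hN, hiN, hjN⟩ := hchain.directedOn (M i) ((equivShrink s).symm i).2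
          (M j) ((equivShrink s).symm j).2
        have hMN : M (equivShrink s ⟨N, hN⟩) = N := by simp [M]
        exact ⟨equivShrink s ⟨N, hN⟩, show M i ≤ M _ by rwa [hMN],
          show M j ≤ M _ by rwa [hMN]⟩⟩
    obtain ⟨N, hle, hN⟩ := exists_forall_le_and_mono_comp_cokernel_π c (M := M)
      (fun _ _ h => h) (fun i => hs ((equivShrink s).symm i).2)
    exact ⟨N, hN, fun N' hN' => by simpa [M] using hle (equivShrink s ⟨N', hN'⟩)⟩

lemma mono_of_maximal_mono_comp_cokernel_π {T I W : C} {c : T ⟶ I} {M : Subobject I}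
    (hM : Maximal (fun N => Mono (c ≫ cokernel.π N.arrow)) M) (g : cokernel M.arrow ⟶ W)
    [Mono ((c ≫ cokernel.π M.arrow) ≫ g)] : Mono g := by
  have : Mono (c ≫ cokernel.π M.arrow ≫ g) := by simpa using ‹Mono ((c ≫ _) ≫ g)›
  have hle : kernelSubobject (cokernel.π M.arrow ≫ g) ≤ M :=
    hM.2 (mono_comp_cokernel_π_of_arrow_comp_eq_zero c _ (kernelSubobject_arrow_comp _))
      (le_kernelSubobject _ _ (by rw [cokernel.condition_assoc, zero_comp]))
  refine Abelian.mono_of_kernel_ι_comp_eq_zero (cokernel.π M.arrow) g ?_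
  rw [← kernelSubobject_arrow', ← Subobject.ofLE_arrow hle, Category.assoc, Category.assoc,
    cokernel.condition, comp_zero, comp_zero]

end Abelian

end CategoryTheory

theorem stmt7_general {C : Type u} [Category.{v} C] [Abelian C]
    -- `A` is a Grothendieck category:
    [HasFilteredColimits C] (hAB5 : Nonempty (AB5 C))
    (G : C) (hG : IsSeparator G)
    -- `B` is a Serre subcategory:
    (P : C → Prop)
    (hSerre : ∀ S : ShortComplex C, S.ShortExact → (P S.X₂ ↔ P S.X₁ ∧ P S.X₃))
    -- `B` is localizing: the inclusion admits a right adjoint (torsion functor) `τ`: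
    (τ : C ⥤ ObjectProperty.FullSubcategory P)
    (adj : ObjectProperty.ι P ⊣ τ)
    -- `B` is closed under essential monomorphisms:
    (hess : ∀ (X Y : C) (f : X ⟶ Y), Mono f →
      (∀ (Z : C) (g : Y ⟶ Z), Mono (f ≫ g) → Mono g) → P X → P Y) :
    ∀ I : C, Injective I →
      Injective ((ObjectProperty.ι P).obj (τ.obj I)) ∧
        IsSplitMono (adj.counit.app I) := by
  intro I hI
  have : AB5 C := hAB5.some
  have : WellPowered.{v} C := wellPowered_of_isSeparator G hG
  have : ObjectProperty.IsClosedUnderSubobjects P :=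
    ⟨fun f hf hY => ((hSerre _
      { exact := ShortComplex.cokernelSequence_exact f, mono_f := hf }).1 hY).1⟩
  have : Mono (adj.counit.app I) := ObjectProperty.mono_counit_app_of_isClosedUnderSubobjects adj I
  obtain ⟨M, hM⟩ := exists_maximal_mono_comp_cokernel_π (adj.counit.app I)
  have hPM : P (cokernel M.arrow) := hess _ _ _ hM.1
    (fun _ g _ => mono_of_maximal_mono_comp_cokernel_π hM g) (τ.obj I).property
  have := ObjectProperty.isSplitMono_counit_app_of_mono_comp adj hPM _ hM.1
  exact ⟨Retract.injective ⟨_, retraction (adj.counit.app I), IsSplitMono.id _⟩, this⟩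

/-- let `A` be a Grothendieck category and `B ⊆ A` a localizing Serre
subcategory closed under essential monomorphisms, with torsion functor `τ` right adjoint
to the inclusion. Then for every injective `I` of `A`, the subobject `τ(I)` is injective
in `A`; in particular, the counit `τ(I) → I` is a split monomorphism. -/
theorem stmt7 {C : Type u} [Category.{v} C] [Abelian C]
    -- `A` is a Grothendieck category:
    [HasColimits C] [HasFilteredColimits C] (hAB5 : Nonempty (AB5 C))
    (G : C) (hG : IsSeparator G)
    -- `B` is a Serre subcategory:
    (P : C → Prop)
    (hIso : ∀ X Y : C, (X ≅ Y) → P X → P Y)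
    (hSerre : ∀ S : ShortComplex C, S.ShortExact → (P S.X₂ ↔ P S.X₁ ∧ P S.X₃))
    -- `B` is localizing: the inclusion admits a right adjoint (torsion functor) `τ`:
    (τ : C ⥤ ObjectProperty.FullSubcategory P)
    (adj : ObjectProperty.ι P ⊣ τ)
    -- `B` is closed under essential monomorphisms:
    (hess : ∀ (X Y : C) (f : X ⟶ Y), Mono f →
      (∀ (Z : C) (g : Y ⟶ Z), Mono (f ≫ g) → Mono g) → P X → P Y) :
    ∀ I : C, Injective I →
      Injective ((ObjectProperty.ι P).obj (τ.obj I)) ∧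
        IsSplitMono (adj.counit.app I) :=
  stmt7_general hAB5 G hG P hSerre τ adj hess

end
end

section
/- Let A be an abelian category with enough injectives, T a generator, and I• = (Iⁿ, dⁿ) a complex of injective objects. If Hⁿ(I•) ≠ 0 for some n, then Hⁿ(Hom_A(T, I•)) ≠ 0. -/
open CategoryTheory CategoryTheory.Limits

universe v u

noncomputable section

/-- The Hom complex `Hom_A(T, I•)` of abelian groups associated to a cochain complex `I•`
and an object `T`. -/
def homCplx {C : Type u} [Category.{v} C] [Abelian C] (T : C) (I : CochainComplex C ℤ) :
    CochainComplex AddCommGrpCat.{v} ℤ :=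
  ((preadditiveCoyoneda.obj (Opposite.op T)).mapHomologicalComplex _).obj I

theorem HomologicalComplex.exactAt_of_exactAt_mapHomologicalComplex_of_faithful
    {C D : Type*} [Category C] [Category D] [Abelian C] [Abelian D]
    (F : C ⥤ D) [F.PreservesZeroMorphisms] [F.Faithful] {ι : Type*} {c : ComplexShape ι}
    (K : HomologicalComplex C c) (i : ι) (hK : ((F.mapHomologicalComplex c).obj K).ExactAt i) :
    K.ExactAt i :=
  F.reflects_exact_of_faithful (K.sc i) hK

theorem stmt11_general {C : Type u} [Category.{v} C] [Abelian C]
    (T : C) (hT : IsSeparator T)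
    (I : CochainComplex C ℤ)
    (n : ℤ) (h : ¬ IsZero (I.homology n)) :
    ¬ IsZero ((homCplx T I).homology n) := by
  have := (isSeparator_iff_faithful_preadditiveCoyoneda T).1 hT
  rw [← HomologicalComplex.exactAt_iff_isZero_homology] at h ⊢
  exact fun hExact => h (I.exactAt_of_exactAt_mapHomologicalComplex_of_faithful _ n hExact)

/-- if `T` is a generator and `I•` a complex of injectives with
`Hⁿ(I•) ≠ 0`, then `Hⁿ(Hom_A(T, I•)) ≠ 0`. -/
theorem stmt11 {C : Type u} [Category.{v} C] [Abelian C] [EnoughInjectives C]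
    (T : C) (hT : IsSeparator T)
    (I : CochainComplex C ℤ) (hI : ∀ n : ℤ, Injective (I.X n))
    (n : ℤ) (h : ¬ IsZero (I.homology n)) :
    ¬ IsZero ((homCplx T I).homology n) :=
  stmt11_general T hT I n h

end
end
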